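/- arXiv:2402.13107 — 2 statements merged into one kernel-verified Lean document; each statement's English description precedes it below -/
import Mathlib

section
/- Let k ≥ 2 be an integer, let c > 0 and L > 0 be real numbers, and let B, F : ℕ → ℕ be sequences such that B(n) ≥ 1 for all n ≥ 0, B(n) ≥ F(n) · (B(⌊n/k⌋))^k for all n ≥ k, and F(n) ≥ 2^{c·n² − L·n} for all n ≥ 1. Then there exists a constant C > 0 such that B(n) ≥ 2^{(k/(k−1))·c·n² − C·n·log₂ n} for all n ≥ 2. -/
/-!
Pass to `b n = log₂ (B n)`, which satisfies `b n ≥ c n² - L n + k b ⌊n/k⌋`. With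
`α = k/(k-1)` one has `c n² + k · α c (n/k)² = α c n²`, so the quadratic part of the bound
reproduces itself up to an error `2 c n` caused by the rounding `n - k ⌊n/k⌋ < k`. The term
`C n log₂ n` gains `C n log₂ k ≥ C n` at every level, which pays for this error and for `-L n`
once `C ≥ 2c + L`. For `n < 2k` the bound is nonpositive, so `B n ≥ 1` suffices there.
-/

open Real

noncomputable def countingBound (k c C n : ℝ) : ℝ :=
  k / (k - 1) * c * n ^ 2 - C * n * logb 2 n

lemma quadratic_deficit {K c m n : ℝ} (hK : 1 < K) (hc : 0 ≤ c) (hm : 0 ≤ m)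
    (hlo : K * m ≤ n) (hhi : n ≤ K * m + (K - 1)) :
    K / (K - 1) * c * n ^ 2 - 2 * c * n ≤ c * n ^ 2 + K * (K / (K - 1) * c * m ^ 2) := by
  have hK1 : 0 < K - 1 := by linarith
  have hdiff : K / (K - 1) * c * n ^ 2 - (c * n ^ 2 + K * (K / (K - 1) * c * m ^ 2))
      = c * ((n - K * m) * (n + K * m)) / (K - 1) := by
    field_simp
    ring
  have hprod : (n - K * m) * (n + K * m) ≤ (K - 1) * (2 * n) :=
    mul_le_mul (by linarith) (by linarith) (by nlinarith) hK1.le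
  have : c * ((n - K * m) * (n + K * m)) / (K - 1) ≤ 2 * c * n := by
    rw [div_le_iff₀ hK1]
    nlinarith [mul_le_mul_of_nonneg_left hprod hc]
  linarith

lemma mul_logb_le_sub {K m n : ℝ} (hK : 2 ≤ K) (hm : 1 ≤ m) (hmn : K * m ≤ n) :
    K * m * logb 2 m ≤ n * logb 2 n - n := by
  have hn : 0 < n := by nlinarith
  have hlogm : 0 ≤ logb 2 m := logb_nonneg one_lt_two hm
  have hlogK : 1 ≤ logb 2 K := by
    rw [← logb_self_eq_one one_lt_two]
    exact logb_le_logb_of_le one_lt_two two_pos hK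
  have hmK : logb 2 m ≤ logb 2 n - logb 2 K := by
    rw [← logb_div hn.ne' (by positivity)]
    exact logb_le_logb_of_le one_lt_two (by positivity)
      ((le_div_iff₀ (by positivity)).2 (by linarith))
  calc K * m * logb 2 m ≤ n * logb 2 m := mul_le_mul_of_nonneg_right hmn hlogm
    _ ≤ n * (logb 2 n - 1) := mul_le_mul_of_nonneg_left (by linarith) hn.le
    _ = n * logb 2 n - n := by ring

lemma countingBound_le_step {K c L C m n : ℝ} (hK : 2 ≤ K) (hc : 0 ≤ c) (hC : 2 * c + L ≤ C)
    (hC0 : 0 ≤ C) (hm : 1 ≤ m) (hlo : K * m ≤ n) (hhi : n ≤ K * m + (K - 1)) :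
    countingBound K c C n ≤ c * n ^ 2 - L * n + K * countingBound K c C m := by
  unfold countingBound
  have hquad := quadratic_deficit (by linarith) hc (by linarith) hlo hhi
  have hlog := mul_le_mul_of_nonneg_left (mul_logb_le_sub hK hm hlo) hC0
  have hn : 0 ≤ n := by nlinarith
  nlinarith [mul_le_mul_of_nonneg_right hC hn]

lemma countingBound_nonpos {k c C n : ℝ} (hk : 2 ≤ k) (hc : 0 ≤ c) (hC : 4 * k * c ≤ C)
    (hn : 2 ≤ n) (hnk : n < 2 * k) : countingBound k c C n ≤ 0 := by
  unfold countingBound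
  have hlogn : 1 ≤ logb 2 n := by
    rw [← logb_self_eq_one one_lt_two]
    exact logb_le_logb_of_le one_lt_two two_pos hn
  have hα : k / (k - 1) ≤ 2 := by rw [div_le_iff₀ (by linarith)]; linarith
  have hαn : k / (k - 1) * c * n ≤ C :=
    calc k / (k - 1) * c * n ≤ 2 * c * (2 * k) := by gcongr
      _ = 4 * k * c := by ring
      _ ≤ C := hC
  have hCn : 0 ≤ C * n := mul_nonneg (by nlinarith) (by linarith)
  nlinarith [mul_le_mul_of_nonneg_left hlogn hCn,
    mul_le_mul_of_nonneg_right hαn (by linarith : 0 ≤ n)]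

lemma cast_div_bounds (n k : ℕ) (hk : 0 < k) :
    (k : ℝ) * (n / k : ℕ) ≤ n ∧ (n : ℝ) ≤ k * (n / k : ℕ) + (k - 1) := by
  have hhi : (n : ℝ) + 1 ≤ k * ((n / k : ℕ) + 1) := by
    exact_mod_cast Nat.lt_mul_div_succ n hk
  exact ⟨by exact_mod_cast Nat.mul_div_le n k, by linarith⟩

theorem countingBound_le_of_recursion (f : ℕ → ℝ) (k : ℕ) (hk : 2 ≤ k) (c L C : ℝ) (hc : 0 ≤ c)
    (hCL : 2 * c + L ≤ C) (hCk : 4 * k * c ≤ C) (hf : ∀ n, 0 ≤ f n)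
    (hrec : ∀ n, k ≤ n → c * n ^ 2 - L * n + k * f (n / k) ≤ f n) (n : ℕ) (hn : 2 ≤ n) :
    countingBound k c C n ≤ f n := by
  have hkR : (2 : ℝ) ≤ k := by exact_mod_cast hk
  induction n using Nat.strong_induction_on with
  | _ n ih =>
  rcases lt_or_ge n (2 * k) with hsmall | hlarge
  · exact (countingBound_nonpos hkR hc hCk (by exact_mod_cast hn)
      (by exact_mod_cast hsmall)).trans (hf n)
  · have hm : 2 ≤ n / k := (Nat.le_div_iff_mul_le (by omega)).2 (by omega)
    obtain ⟨hlo, hhi⟩ := cast_div_bounds n k (by omega)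
    calc countingBound k c C n
        ≤ c * n ^ 2 - L * n + k * countingBound k c C (n / k : ℕ) :=
          countingBound_le_step hkR hc hCL (le_trans (by positivity) hCk)
            (by exact_mod_cast (by omega : 1 ≤ n / k)) hlo hhi
      _ ≤ c * n ^ 2 - L * n + k * f (n / k) := by
          gcongr
          exact ih _ (Nat.div_lt_self (by omega) (by omega)) hm
      _ ≤ f n := hrec n (by omega)

lemma add_mul_logb_le_logb {x y z k : ℕ} {e : ℝ} (hy : 0 < y) (hx : (2 : ℝ) ^ e ≤ x)
    (hxyz : x * y ^ k ≤ z) : e + k * logb 2 y ≤ logb 2 z := by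
  have hxpos : (0 : ℝ) < x := lt_of_lt_of_le (rpow_pos_of_pos two_pos _) hx
  have hypos : (0 : ℝ) < y := by exact_mod_cast hy
  calc e + k * logb 2 y
      ≤ logb 2 x + k * logb 2 y := by
        gcongr
        exact (le_logb_iff_rpow_le one_lt_two hxpos).2 hx
    _ = logb 2 ((x : ℝ) * (y : ℝ) ^ k) := by
        rw [logb_mul hxpos.ne' (pow_pos hypos k).ne', logb_pow]
    _ ≤ logb 2 z := logb_le_logb_of_le one_lt_two (mul_pos hxpos (pow_pos hypos k))
        (by exact_mod_cast hxyz)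

theorem recursive_counting_scheme (k : ℕ) (hk : 2 ≤ k) (c L : ℝ) (hc : 0 < c) (hL : 0 < L)
    (B F : ℕ → ℕ)
    (hB : ∀ n : ℕ, 1 ≤ B n)
    (hrec : ∀ n : ℕ, k ≤ n → F n * B (n / k) ^ k ≤ B n)
    (hF : ∀ n : ℕ, 1 ≤ n → (F n : ℝ) ≥ 2 ^ (c * (n : ℝ) ^ 2 - L * (n : ℝ))) :
    ∃ C : ℝ, 0 < C ∧ ∀ n : ℕ, 2 ≤ n →
      (B n : ℝ) ≥
        2 ^ ((k : ℝ) / ((k : ℝ) - 1) * c * (n : ℝ) ^ 2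
              - C * (n : ℝ) * Real.logb 2 (n : ℝ)) := by
  refine ⟨4 * k * c + (2 * c + L), by positivity, fun n hn => ?_⟩
  rw [ge_iff_le, ← le_logb_iff_rpow_le one_lt_two (by exact_mod_cast hB n)]
  have hlog : ∀ n, k ≤ n → c * n ^ 2 - L * n + k * logb 2 (B (n / k)) ≤ logb 2 (B n) :=
    fun n hkn => add_mul_logb_le_logb (hB _) (hF n (by omega)) (hrec n hkn)
  exact countingBound_le_of_recursion (fun n => logb 2 (B n)) k hk c L _ hc.le
    (le_add_of_nonneg_left (by positivity)) (le_add_of_nonneg_right (by positivity))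
    (fun n => logb_nonneg one_lt_two (by exact_mod_cast hB n)) hlog n hn
end

section
/- (Lindström–Gessel–Viennot lemma.) Let V be a finite type and R : V → V → Prop a relation whose transitive closure is irreflexive (i.e., (V, R) is a finite directed acyclic graph). For u, v ∈ V let p(u, v) denote the number of directed paths from u to v. Let r ≥ 1 and let s, e : Fin r → V. Assume that for every r-tuple (P_1, …, P_r) of pairwise vertex-disjoint directed paths such that P_i starts at s_i for each i and such that there is a permutation σ of Fin r with P_i ending at e_{σ(i)} for each i, necessarily σ is the identity. Then the number of r-tuples (P_1, …, P_r) of pairwise vertex-disjoint directed paths with P_i going from s_i to e_i equals the determinant of the r × r integer matrix whose (i, j) entry is p(s_i, e_j). -/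
/-- `IsPath R u v p` : the nonempty list `p` of vertices is a directed path from `u`
to `v` in the digraph with edge relation `R`. Paths of length `0` (i.e. `p = [u]`,
`u = v`) are allowed. -/
def IsPath {V : Type*} (R : V → V → Prop) (u v : V) (p : List V) : Prop :=
  p ≠ [] ∧ p.head? = some u ∧ p.getLast? = some v ∧ p.Chain' R

/-- The number of directed paths from `u` to `v`. -/
noncomputable def pathCount {V : Type*} (R : V → V → Prop) (u v : V) : ℕ :=
  Nat.card {p : List V // IsPath R u v p}

/-!
Expanding the determinant, `det (p (s i, e j))` is the signed count `∑ sign σ` over pairs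
`(σ, P)` where `P k` is a path from `s k` to `e (σ k)`. On the families in which two paths meet,
exchanging the tails of two paths at a common vertex `x` is a sign-reversing involution, provided
`x` and the two paths are chosen canonically. We choose `x` from the set of vertices lying on two
paths and then a pair of paths through `x`; in an acyclic graph every path visits a vertex at most
once, so the exchange preserves both sets and hence the choice. What survives are the families of
pairwise vertex-disjoint paths, which by hypothesis all have `σ = 1`.
-/

section Splice

variable {V : Type*} [DecidableEq V]

def spliceAt (x : V) (p q : List V) : List V :=
  p.take (p.idxOf x + 1) ++ q.drop (q.idxOf x + 1)

theorem spliceAt_self (x : V) (p : List V) : spliceAt x p p = p :=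
  p.take_append_drop _

theorem spliceAt_append_cons {x : V} {s t s' t' : List V} (hs : x ∉ s) (hs' : x ∉ s') :
    spliceAt x (s ++ x :: t) (s' ++ x :: t') = s ++ x :: t' := by
  simp [spliceAt, List.idxOf_append_of_notMem hs, List.idxOf_append_of_notMem hs',
    List.take_append]

theorem mem_or_mem_of_mem_spliceAt {x w : V} {p q : List V} (h : w ∈ spliceAt x p q) :
    w ∈ p ∨ w ∈ q :=
  (List.mem_append.1 h).imp (List.take_subset _ _ ·) (List.drop_subset _ _ ·)

theorem mem_spliceAt_self {x : V} {p : List V} (q : List V) (hx : x ∈ p) : x ∈ spliceAt x p q :=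
  List.mem_append_left _ <| (List.mem_take_iff_idxOf_lt hx).2 (Nat.lt_succ_self _)

theorem spliceAt_spliceAt {x : V} {p q : List V} (hp : x ∈ p) (hq : x ∈ q) :
    spliceAt x (spliceAt x p q) (spliceAt x q p) = p := by
  obtain ⟨s, t, hs, rfl, -⟩ := List.exists_erase_eq hp
  obtain ⟨s', t', hs', rfl, -⟩ := List.exists_erase_eq hq
  simp only [spliceAt_append_cons hs hs', spliceAt_append_cons hs' hs]

theorem mem_of_mem_spliceAt_of_mem_spliceAt {x w : V} {p q : List V} (hp : p.Nodup)
    (hq : q.Nodup) (h₁ : w ∈ spliceAt x p q) (h₂ : w ∈ spliceAt x q p) : w ∈ p ∧ w ∈ q := by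
  simp only [spliceAt, List.mem_append] at h₁ h₂
  rcases h₁ with h₁ | h₁ <;> rcases h₂ with h₂ | h₂
  · exact ⟨List.take_subset _ _ h₁, List.take_subset _ _ h₂⟩
  · exact absurd h₂ (List.disjoint_take_drop hp le_rfl h₁)
  · exact absurd h₁ (List.disjoint_take_drop hq le_rfl h₂)
  · exact ⟨List.drop_subset _ _ h₂, List.drop_subset _ _ h₁⟩

end Splice

section Crossings

variable {ι V : Type*}

def crossPairs (P : ι → List V) (x : V) : Set (ι × ι) :=
  {kl | kl.1 ≠ kl.2 ∧ x ∈ P kl.1 ∧ x ∈ P kl.2}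

def crossVertices (P : ι → List V) : Set V :=
  {x | (crossPairs P x).Nonempty}

theorem not_nonempty_crossVertices_iff {P : ι → List V} :
    ¬ (crossVertices P).Nonempty ↔ ∀ i j, i ≠ j → ∀ v, v ∈ P i → v ∉ P j := by
  simp only [crossVertices, crossPairs, Set.Nonempty, Set.mem_ofPred_eq, Prod.exists, not_exists,
    not_and]
  exact ⟨fun h i j hij v => h v i j hij, fun h v i j hij => h i j hij v⟩

/-- Any choice would do, as long as it is a function of `crossVertices P` and of the pairs of
paths through the chosen vertex, which is what makes tail exchange an involution. -/
noncomputable def chosenCrossing (P : ι → List V) (h : (crossVertices P).Nonempty) : V × ι × ι :=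
  (h.some, Set.Nonempty.some h.some_mem)

theorem chosenCrossing_spec (P : ι → List V) (h : (crossVertices P).Nonempty) :
    (chosenCrossing P h).2 ∈ crossPairs P (chosenCrossing P h).1 :=
  Set.Nonempty.some_mem h.some_mem

theorem chosenCrossing_congr {P Q : ι → List V} (hP : (crossVertices P).Nonempty)
    (hQ : (crossVertices Q).Nonempty) (hV : crossVertices Q = crossVertices P)
    (hX : crossPairs Q (chosenCrossing P hP).1 = crossPairs P (chosenCrossing P hP).1) :
    chosenCrossing Q hQ = chosenCrossing P hP := by
  have hx : hQ.some = hP.some := by congr 1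
  refine Prod.ext hx ?_
  change Set.Nonempty.some _ = Set.Nonempty.some _
  congr 1
  rw [hx]
  exact hX

end Crossings

section SwapTails

open Equiv

variable {ι V : Type*} [DecidableEq ι] {P : ι → List V} {i j k : ι} {x : V}

theorem mem_and_mem_of_swap_apply_ne (hi : x ∈ P i) (hj : x ∈ P j) (hk : swap i j k ≠ k) :
    x ∈ P k ∧ x ∈ P (swap i j k) := by
  rcases eq_or_ne k i with rfl | hki
  · exact ⟨hi, by rwa [swap_apply_left]⟩
  rcases eq_or_ne k j with rfl | hkj
  · exact ⟨hj, by rwa [swap_apply_right]⟩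
  exact absurd (swap_apply_of_ne_of_ne hki hkj) hk

variable [DecidableEq V]

/-- Entries other than `P i` and `P j` are unchanged, since `spliceAt x p p = p`. -/
def swapTails (P : ι → List V) (i j : ι) (x : V) : ι → List V :=
  fun k => spliceAt x (P k) (P (swap i j k))

theorem swapTails_of_swap_apply_eq (hk : swap i j k = k) : swapTails P i j x k = P k := by
  rw [swapTails, hk, spliceAt_self]

theorem swapTails_swapTails (hi : x ∈ P i) (hj : x ∈ P j) :
    swapTails (swapTails P i j x) i j x = P := by
  funext k
  by_cases hk : swap i j k = k
  · rw [swapTails_of_swap_apply_eq hk, swapTails_of_swap_apply_eq hk]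
  simp only [swapTails, swap_apply_self]
  exact spliceAt_spliceAt (mem_and_mem_of_swap_apply_ne hi hj hk).1
    (mem_and_mem_of_swap_apply_ne hi hj hk).2

theorem mem_swapTails_self_iff (hi : x ∈ P i) (hj : x ∈ P j) :
    x ∈ swapTails P i j x k ↔ x ∈ P k := by
  by_cases hk : swap i j k = k
  · rw [swapTails_of_swap_apply_eq hk]
  have hxk := (mem_and_mem_of_swap_apply_ne hi hj hk).1
  exact iff_of_true (mem_spliceAt_self _ hxk) hxk

theorem crossPairs_swapTails (hi : x ∈ P i) (hj : x ∈ P j) :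
    crossPairs (swapTails P i j x) x = crossPairs P x := by
  ext
  simp [crossPairs, mem_swapTails_self_iff hi hj]

theorem crossVertices_swapTails_subset (hP : ∀ k, (P k).Nodup) :
    crossVertices (swapTails P i j x) ⊆ crossVertices P := by
  rintro w ⟨⟨k, l⟩, hkl, hwk, hwl⟩
  dsimp only at hkl hwk hwl
  by_cases hτ : swap i j k = l
  · have hτ' : swap i j l = k := by rw [← hτ, swap_apply_self]
    rw [swapTails, hτ] at hwk
    rw [swapTails, hτ'] at hwl
    exact ⟨(k, l), hkl, mem_of_mem_spliceAt_of_mem_spliceAt (hP k) (hP l) hwk hwl⟩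
  have hτ' : k ≠ swap i j l := fun h => hτ (by rw [h, swap_apply_self])
  rcases mem_or_mem_of_mem_spliceAt hwk with hwk | hwk <;>
    rcases mem_or_mem_of_mem_spliceAt hwl with hwl | hwl
  · exact ⟨(k, l), hkl, hwk, hwl⟩
  · exact ⟨(k, _), hτ', hwk, hwl⟩
  · exact ⟨(_, l), hτ, hwk, hwl⟩
  · exact ⟨(_, _), (swap i j).injective.ne hkl, hwk, hwl⟩

end SwapTails

section Paths

open Equiv

variable {ι V : Type*} {R : V → V → Prop}

theorem IsPath.nodup (hacyclic : ∀ v, ¬ Relation.TransGen R v v) {u v : V} {p : List V}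
    (h : IsPath R u v p) : p.Nodup := by
  have hpw : p.Pairwise (Relation.TransGen R) :=
    List.isChain_iff_pairwise.1 (h.2.2.2.imp fun _ _ => .single)
  refine hpw.imp ?_
  rintro a _ hab rfl
  exact hacyclic a hab

theorem IsPath.spliceAt [DecidableEq V] {a b c d x : V} {p q : List V}
    (hp : IsPath R a b p) (hq : IsPath R c d q) (hxp : x ∈ p) (hxq : x ∈ q) :
    IsPath R a d (spliceAt x p q) := by
  obtain ⟨s, t, hs, rfl, -⟩ := List.exists_erase_eq hxp
  obtain ⟨s', t', hs', rfl, -⟩ := List.exists_erase_eq hxq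
  obtain ⟨-, hph, -, hpc⟩ := hp
  obtain ⟨-, -, hql, hqc⟩ := hq
  rw [spliceAt_append_cons hs hs']
  refine ⟨by simp, by simpa [List.head?_append] using hph,
    by simpa [List.getLast?_append] using hql, ?_⟩
  rw [← List.singleton_append, ← List.append_assoc] at hpc ⊢
  exact hpc.left_of_append.append_overlap hqc.right_of_append (List.cons_ne_nil _ _)

def pathFamilies (R : V → V → Prop) (s e : ι → V) : Set (Perm ι × (ι → List V)) :=
  {c | ∀ k, IsPath R (s k) (e (c.1 k)) (c.2 k)}

variable [DecidableEq ι] [DecidableEq V] {s e : ι → V} {σ : Perm ι} {P : ι → List V} {i j : ι}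
  {x : V}

theorem isPath_swapTails (hP : ∀ k, IsPath R (s k) (e (σ k)) (P k)) (hi : x ∈ P i) (hj : x ∈ P j)
    (k : ι) : IsPath R (s k) (e ((σ * swap i j) k)) (swapTails P i j x k) := by
  rw [Perm.mul_apply]
  by_cases hk : swap i j k = k
  · rw [swapTails_of_swap_apply_eq hk, hk]
    exact hP k
  obtain ⟨hxk, hxk'⟩ := mem_and_mem_of_swap_apply_ne hi hj hk
  exact (hP k).spliceAt (hP _) hxk hxk'

theorem crossVertices_swapTails (hacyclic : ∀ v, ¬ Relation.TransGen R v v)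
    (hP : ∀ k, IsPath R (s k) (e (σ k)) (P k)) (hi : x ∈ P i) (hj : x ∈ P j) :
    crossVertices (swapTails P i j x) = crossVertices P := by
  refine (crossVertices_swapTails_subset fun k => (hP k).nodup hacyclic).antisymm ?_
  have hQ := crossVertices_swapTails_subset (i := i) (j := j) (x := x)
    fun k => (isPath_swapTails hP hi hj k).nodup hacyclic
  rwa [swapTails_swapTails hi hj] at hQ

noncomputable def untangle (c : Perm ι × (ι → List V)) (h : (crossVertices c.2).Nonempty) :
    Perm ι × (ι → List V) :=
  (c.1 * swap (chosenCrossing c.2 h).2.1 (chosenCrossing c.2 h).2.2,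
    swapTails c.2 (chosenCrossing c.2 h).2.1 (chosenCrossing c.2 h).2.2 (chosenCrossing c.2 h).1)

variable {c : Perm ι × (ι → List V)} (h : (crossVertices c.2).Nonempty)

theorem untangle_mem_pathFamilies (hc : c ∈ pathFamilies R s e) :
    untangle c h ∈ pathFamilies R s e :=
  have ⟨_, hi, hj⟩ := chosenCrossing_spec c.2 h
  isPath_swapTails hc hi hj

theorem crossVertices_untangle (hacyclic : ∀ v, ¬ Relation.TransGen R v v)
    (hc : c ∈ pathFamilies R s e) : crossVertices (untangle c h).2 = crossVertices c.2 :=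
  have ⟨_, hi, hj⟩ := chosenCrossing_spec c.2 h
  crossVertices_swapTails hacyclic hc hi hj

theorem sign_untangle [Fintype ι] : Perm.sign (untangle c h).1 = -Perm.sign c.1 := by
  dsimp only [untangle]
  rw [Perm.sign_mul, Perm.sign_swap (chosenCrossing_spec c.2 h).1, mul_neg_one]

theorem untangle_untangle (hacyclic : ∀ v, ¬ Relation.TransGen R v v)
    (hc : c ∈ pathFamilies R s e) (h' : (crossVertices (untangle c h).2).Nonempty) :
    untangle (untangle c h) h' = c := by
  obtain ⟨-, hi, hj⟩ := chosenCrossing_spec c.2 h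
  have hcross : chosenCrossing (untangle c h).2 h' = chosenCrossing c.2 h :=
    chosenCrossing_congr h h' (crossVertices_untangle h hacyclic hc) (crossPairs_swapTails hi hj)
  dsimp only [untangle] at hcross ⊢
  rw [hcross]
  simp only [mul_assoc, swap_mul_self, mul_one, swapTails_swapTails hi hj]

end Paths

section Counting

open Finset Equiv

variable {ι V : Type*} [Fintype ι] {R : V → V → Prop}

theorem finite_setOf_isPath [Fintype V] (hacyclic : ∀ v, ¬ Relation.TransGen R v v)
    (u v : V) : {p | IsPath R u v p}.Finite :=
  (List.finite_length_le V (Fintype.card V)).subset fun _ hp =>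
    (hp.nodup hacyclic).length_le_card

theorem finite_pathFamilies [Fintype V] (hacyclic : ∀ v, ¬ Relation.TransGen R v v)
    (s e : ι → V) : (pathFamilies R s e).Finite :=
  (Set.finite_univ.biUnion fun σ _ => (Set.Finite.pi' fun k =>
    finite_setOf_isPath hacyclic (s k) (e (σ k))).image (Prod.mk σ)).subset
    fun ⟨σ, _⟩ hc => Set.mem_biUnion (Set.mem_univ σ) (Set.mem_image_of_mem (Prod.mk σ) hc)

theorem card_pathTuples (s e : ι → V) (σ : Perm ι) :
    Nat.card {P : ι → List V // ∀ k, IsPath R (s k) (e (σ k)) (P k)} =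
      ∏ k, pathCount R (s k) (e (σ k)) := by
  rw [Nat.card_congr (Equiv.subtypePiEquivPi), Nat.card_pi]
  rfl

theorem det_eq_sum_sign_pathFamilies [DecidableEq ι] [Fintype V]
    (hacyclic : ∀ v, ¬ Relation.TransGen R v v) (s e : ι → V) :
    (Matrix.of fun i j => (pathCount R (s i) (e j) : ℤ)).det =
      ∑ c ∈ (finite_pathFamilies hacyclic s e).toFinset, (Perm.sign c.1 : ℤ) := by
  have htuples (σ : Perm ι) := Set.Finite.pi' fun k =>
    finite_setOf_isPath hacyclic (s k) (e (σ k))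
  rw [← Matrix.det_transpose, Matrix.det_apply', sum_finset_product _ univ
    (fun σ => (htuples σ).toFinset) (by simp [pathFamilies])]
  refine sum_congr rfl fun σ _ => ?_
  simp only [sum_const, ← Nat.card_eq_card_finite_toFinset]
  change _ = Nat.card {P : ι → List V // ∀ k, IsPath R (s k) (e (σ k)) (P k)} • _
  simp [card_pathTuples, mul_comm]

open scoped Classical in
theorem sum_sign_tangled_pathFamilies_eq_zero [DecidableEq ι] [Fintype V] [DecidableEq V]
    (hacyclic : ∀ v, ¬ Relation.TransGen R v v) (s e : ι → V) :
    ∑ c ∈ (finite_pathFamilies hacyclic s e).toFinset with (crossVertices c.2).Nonempty,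
      (Perm.sign c.1 : ℤ) = 0 := by
  refine sum_involution (fun c hc => untangle c (mem_filter.1 hc).2) ?_ ?_ ?_ ?_
  · intro c hc
    rw [sign_untangle, Units.val_neg, add_neg_cancel]
  · intro c hc _ hfix
    exact units_ne_neg_self _ (by rw [← sign_untangle (mem_filter.1 hc).2, hfix])
  · intro c hc
    obtain ⟨hc, htangled⟩ := mem_filter.1 hc
    rw [Set.Finite.mem_toFinset] at hc
    rw [mem_filter, Set.Finite.mem_toFinset, crossVertices_untangle htangled hacyclic hc]
    exact ⟨untangle_mem_pathFamilies htangled hc, htangled⟩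
  · intro c hc
    obtain ⟨hc, htangled⟩ := mem_filter.1 hc
    exact untangle_untangle htangled hacyclic ((Set.Finite.mem_toFinset _).1 hc) _

open scoped Classical in
theorem sum_sign_untangled_pathFamilies_eq_card [DecidableEq ι] [Fintype V]
    (hacyclic : ∀ v, ¬ Relation.TransGen R v v) (s e : ι → V)
    (hcompat : ∀ (P : ι → List V) (σ : Perm ι),
      (∀ i, IsPath R (s i) (e (σ i)) (P i)) →
      (∀ i j, i ≠ j → ∀ v, v ∈ P i → v ∉ P j) → σ = 1) :
    ∑ c ∈ (finite_pathFamilies hacyclic s e).toFinset with ¬ (crossVertices c.2).Nonempty,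
      (Perm.sign c.1 : ℤ) =
      Nat.card {P : ι → List V // (∀ i, IsPath R (s i) (e i) (P i)) ∧
        ∀ i j, i ≠ j → ∀ v, v ∈ P i → v ∉ P j} := by
  set U := (finite_pathFamilies hacyclic s e).toFinset.filter
    fun c => ¬ (crossVertices c.2).Nonempty
  have mem_U {c} :
      c ∈ U ↔ c ∈ pathFamilies R s e ∧ ∀ i j, i ≠ j → ∀ v, v ∈ c.2 i → v ∉ c.2 j := by
    rw [mem_filter, Set.Finite.mem_toFinset, not_nonempty_crossVertices_iff]
  have hσ {c} (hc : c ∈ U) : c.1 = 1 := hcompat c.2 c.1 (mem_U.1 hc).1 (mem_U.1 hc).2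
  rw [sum_congr rfl fun c hc => by rw [hσ hc, Perm.sign_one, Units.val_one], sum_const,
    nsmul_one, ← Nat.card_eq_finsetCard]
  norm_cast
  refine Nat.card_congr
    { toFun := fun c => ⟨c.1.2, fun k => by simpa [hσ c.2] using (mem_U.1 c.2).1 k,
        (mem_U.1 c.2).2⟩
      invFun := fun P => ⟨(1, P.1), mem_U.2 ⟨P.2.1, P.2.2⟩⟩
      left_inv := fun c => Subtype.ext (Prod.ext (hσ c.2).symm rfl)
      right_inv := fun _ => rfl }

end Counting

theorem lindstrom_gessel_viennot_general {V : Type*} [Fintype V] (R : V → V → Prop)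
    (hacyclic : ∀ v : V, ¬ Relation.TransGen R v v)
    (r : ℕ) (s e : Fin r → V)
    (hcompat : ∀ (P : Fin r → List V) (σ : Equiv.Perm (Fin r)),
      (∀ i, IsPath R (s i) (e (σ i)) (P i)) →
      (∀ i j, i ≠ j → ∀ v, v ∈ P i → v ∉ P j) → σ = 1) :
    (Nat.card {P : Fin r → List V //
        (∀ i, IsPath R (s i) (e i) (P i)) ∧
        (∀ i j, i ≠ j → ∀ v, v ∈ P i → v ∉ P j)} : ℤ) =
      Matrix.det (Matrix.of fun i j : Fin r => (pathCount R (s i) (e j) : ℤ)) := by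
  classical
  rw [det_eq_sum_sign_pathFamilies hacyclic, ← Finset.sum_filter_add_sum_filter_not _
    (fun c => (crossVertices c.2).Nonempty), sum_sign_tangled_pathFamilies_eq_zero hacyclic,
    zero_add, sum_sign_untangled_pathFamilies_eq_card hacyclic s e hcompat]

/-- The Lindström–Gessel–Viennot lemma. -/
theorem lindstrom_gessel_viennot {V : Type*} [Fintype V] (R : V → V → Prop)
    (hacyclic : ∀ v : V, ¬ Relation.TransGen R v v)
    (r : ℕ) (hr : 1 ≤ r) (s e : Fin r → V)
    (hcompat : ∀ (P : Fin r → List V) (σ : Equiv.Perm (Fin r)),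
      (∀ i, IsPath R (s i) (e (σ i)) (P i)) →
      (∀ i j, i ≠ j → ∀ v, v ∈ P i → v ∉ P j) → σ = 1) :
    (Nat.card {P : Fin r → List V //
        (∀ i, IsPath R (s i) (e i) (P i)) ∧
        (∀ i j, i ≠ j → ∀ v, v ∈ P i → v ∉ P j)} : ℤ) =
      Matrix.det (Matrix.of fun i j : Fin r => (pathCount R (s i) (e j) : ℤ)) :=
  lindstrom_gessel_viennot_general R hacyclic r s e hcompat
end
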